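/- For k ≥ 3 and 0 ≤ v < |I_{k-2}|, the Stern polynomials satisfy deg(B_{a_k + v}) = deg(B_{a_{k-2} + v}) + 1 and lc(B_{a_k + v}) = lc(B_{a_{k-2} + v}), where a_k denotes the smallest integer of NAF-bitlength k. -/

import Mathlib

open Polynomial in
/-- The Stern polynomial: `B 0 = 0`, `B 1 = 1`, `B (2n) = t * B n`, `B (2n+1) = B n + B (n+1)`. -/
noncomputable def sternP : ℕ → Polynomial ℕ
  | 0 => 0
  | 1 => 1
  | n + 2 =>
    if (n + 2) % 2 = 0 then X * sternP (n / 2 + 1)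
    else sternP (n / 2 + 1) + sternP (n / 2 + 2)
decreasing_by all_goals omega

/-- The digits of a BSD representation lie in {-1, 0, 1}. -/
def IsBSDDigits {i : ℕ} (b : Fin i → ℤ) : Prop := ∀ j, b j ∈ ({-1, 0, 1} : Set ℤ)

/-- The value represented by the digit string `b` (least significant digit `b 0`). -/
def bsdVal {i : ℕ} (b : Fin i → ℤ) : ℤ := ∑ j : Fin i, b j * 2 ^ (j : ℕ)

/-- `b` is a (not necessarily reduced) non-adjacent form digit string of length `k`:
digits in {-1,0,1}, no two adjacent digits both nonzero, and nonzero leading digit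
(when `k > 0`). -/
def IsReducedNAF {k : ℕ} (b : Fin k → ℤ) : Prop :=
  IsBSDDigits b ∧
  (∀ j : Fin k, ∀ h : (j : ℕ) + 1 < k, b j = 0 ∨ b ⟨(j : ℕ) + 1, h⟩ = 0) ∧
  (∀ h : 0 < k, b ⟨k - 1, Nat.sub_lt h one_pos⟩ ≠ 0)

/-- `m` has a reduced NAF representation of bitlength `k`. -/
def HasNAFLen (m : ℤ) (k : ℕ) : Prop :=
  ∃ b : Fin k → ℤ, IsReducedNAF b ∧ bsdVal b = m

/-- `I k`: the set of positive integers of NAF-bitlength `k`. -/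
def NAFInterval (k : ℕ) : Set ℕ := {n : ℕ | HasNAFLen (n : ℤ) k}

/-- `a k = min I k`: `a 1 = 1`, `a 2 = 2`, `a k = 2^(k-2) + a (k-2)`. -/
def aseq : ℕ → ℕ
  | 0 => 0
  | 1 => 1
  | 2 => 2
  | k + 3 => 2 ^ (k + 1) + aseq (k + 1)

/-- The NAF-bitlength of `n`. -/
noncomputable def nafLen (n : ℕ) : ℕ := sInf {k : ℕ | HasNAFLen (n : ℤ) k}

/-- The minimal Hamming weight of a BSD representation of `n` of length
equal to its NAF-bitlength. -/
noncomputable def minWeight (n : ℕ) : ℕ :=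
  sInf {w : ℕ | ∃ b : Fin (nafLen n) → ℤ,
    IsBSDDigits b ∧ bsdVal b = (n : ℤ) ∧ {j | b j ≠ 0}.ncard = w}

/-- `Z n`: the number of zeros in an optimal (minimal-weight) BSD representation of `n`
of length equal to its NAF-bitlength. -/
noncomputable def Zfun (n : ℕ) : ℕ := nafLen n - minWeight n

/-- `M n`: the number of optimal (minimal-weight) BSD representations of `n`
of length equal to its NAF-bitlength. -/
noncomputable def Mfun (n : ℕ) : ℕ :=
  {b : Fin (nafLen n) → ℤ |
    IsBSDDigits b ∧ bsdVal b = (n : ℤ) ∧ {j | b j ≠ 0}.ncard = minWeight n}.ncard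


/-!
The identity `B (2^k + n) = t * B n + B (2^k - n)` for `n ≤ 2^k` reduces the claim, with
`a_k = 2^(k-2) + a_(k-2)` and `n = a_(k-2) + v`, to `deg B (2^j - n) ≤ deg B n` for
`a_j ≤ n ≤ 2^j`. The bound `n ≤ 2^j` holds because every integer of NAF-bitlength `j ≥ 2` has
leading digits `1 0` and so lies strictly between `2^(j-2)` and `3 * 2^(j-2)`. As the
coefficients are natural numbers, `deg B (2m) = deg B m + 1` and
`deg B (2m+1) = max (deg B m) (deg B (m+1))`, and the degree inequality follows by induction
on `j` from `3 a_j = 2^j + 1 + [j even]`.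
-/

open Polynomial

section NoNegatives

variable {R : Type*} [Semiring R] [Subsingleton (AddUnits R)]

theorem Polynomial.add_ne_zero_of_right {p q : R[X]} (hq : q ≠ 0) : p + q ≠ 0 := by
  intro h
  have hc : p.coeff q.natDegree + q.leadingCoeff = 0 := by
    rw [leadingCoeff, ← coeff_add, h, coeff_zero]
  exact hq (leadingCoeff_eq_zero.1 (add_eq_zero.1 hc).2)

theorem Polynomial.natDegree_add_eq_max (p q : R[X]) :
    (p + q).natDegree = max p.natDegree q.natDegree := by
  have le_of_ne_zero : ∀ p q : R[X], p ≠ 0 → p.natDegree ≤ (p + q).natDegree := by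
    refine fun p q hp => le_natDegree_of_ne_zero fun h => hp (leadingCoeff_eq_zero.1 ?_)
    rw [coeff_add] at h
    exact (add_eq_zero.1 h).1
  refine le_antisymm (natDegree_add_le p q) (max_le ?_ ?_)
  · rcases eq_or_ne p 0 with rfl | hp
    · simp
    · exact le_of_ne_zero p q hp
  · rcases eq_or_ne q 0 with rfl | hq
    · simp
    · rw [add_comm]; exact le_of_ne_zero q p hq

end NoNegatives

theorem Polynomial.natDegree_X_mul_add_of_natDegree_le {R : Type*} [Semiring R] [Nontrivial R]
    {p q : R[X]} (hp : p ≠ 0) (hq : q.natDegree ≤ p.natDegree) :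
    (X * p + q).natDegree = p.natDegree + 1 ∧ (X * p + q).leadingCoeff = p.leadingCoeff := by
  have hlt : q.natDegree < (X * p).natDegree := by rw [natDegree_X_mul hp]; omega
  refine ⟨by rw [natDegree_add_eq_left_of_natDegree_lt hlt, natDegree_X_mul hp], ?_⟩
  rw [leadingCoeff_add_of_degree_lt' (degree_lt_degree hlt), (commute_X p).eq, leadingCoeff_mul_X]

theorem sternP_zero : sternP 0 = 0 := by
  rw [sternP]

theorem sternP_one : sternP 1 = 1 := by
  rw [sternP]

theorem sternP_two_mul (m : ℕ) : sternP (2 * m) = X * sternP m := by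
  cases m with
  | zero => simp [sternP_zero]
  | succ m =>
    rw [show 2 * (m + 1) = 2 * m + 2 by ring, sternP, if_pos (by omega)]
    congr 2
    omega

theorem sternP_two_mul_add_one (m : ℕ) : sternP (2 * m + 1) = sternP m + sternP (m + 1) := by
  cases m with
  | zero => simp [sternP_zero, sternP_one]
  | succ m =>
    rw [show 2 * (m + 1) + 1 = 2 * m + 1 + 2 by ring, sternP, if_neg (by omega)]
    congr 2 <;> omega

theorem sternP_ne_zero {n : ℕ} (hn : n ≠ 0) : sternP n ≠ 0 := by
  induction n using Nat.strong_induction_on with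
  | _ n ih =>
    obtain ⟨m, rfl | rfl⟩ := Nat.even_or_odd' n
    · rw [sternP_two_mul]
      exact mul_ne_zero X_ne_zero (ih m (by omega) (by omega))
    · rcases eq_or_ne m 0 with rfl | hm
      · simp [sternP_one]
      · rw [sternP_two_mul_add_one]
        exact add_ne_zero_of_right (ih (m + 1) (by omega) (by omega))

theorem natDegree_sternP_two_mul {m : ℕ} (hm : m ≠ 0) :
    (sternP (2 * m)).natDegree = (sternP m).natDegree + 1 := by
  rw [sternP_two_mul, natDegree_X_mul (sternP_ne_zero hm)]

theorem natDegree_sternP_two_mul_le (m : ℕ) :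
    (sternP (2 * m)).natDegree ≤ (sternP m).natDegree + 1 := by
  rw [sternP_two_mul, add_comm]
  exact natDegree_mul_le.trans (by gcongr; exact natDegree_X_le)

theorem natDegree_sternP_two_mul_add_one (m : ℕ) :
    (sternP (2 * m + 1)).natDegree = max (sternP m).natDegree (sternP (m + 1)).natDegree := by
  rw [sternP_two_mul_add_one, natDegree_add_eq_max]

theorem sternP_two_pow_add (k : ℕ) {n : ℕ} (hn : n ≤ 2 ^ k) :
    sternP (2 ^ k + n) = X * sternP n + sternP (2 ^ k - n) := by
  induction k generalizing n with
  | zero =>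
    interval_cases n <;> simp [sternP_zero, sternP_one, sternP_two_mul 1]
  | succ k ih =>
    rw [pow_succ] at hn ⊢
    obtain ⟨t, rfl | rfl⟩ := Nat.even_or_odd' n
    · rw [show 2 ^ k * 2 + 2 * t = 2 * (2 ^ k + t) by ring,
        show 2 ^ k * 2 - 2 * t = 2 * (2 ^ k - t) by omega,
        sternP_two_mul, sternP_two_mul, sternP_two_mul, ih (by omega)]
      ring
    · rw [show 2 ^ k * 2 + (2 * t + 1) = 2 * (2 ^ k + t) + 1 by ring,
        show 2 ^ k * 2 - (2 * t + 1) = 2 * (2 ^ k - (t + 1)) + 1 by omega,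
        sternP_two_mul_add_one, sternP_two_mul_add_one, sternP_two_mul_add_one,
        show 2 ^ k - (t + 1) + 1 = 2 ^ k - t by omega, add_assoc (2 ^ k) t 1, ih (by omega),
        ih (by omega)]
      ring

theorem three_mul_aseq_succ : ∀ j : ℕ, 3 * aseq (j + 1) = 2 ^ (j + 1) + 1 + j % 2
  | 0 => rfl
  | 1 => rfl
  | j + 2 => by
    have ih := three_mul_aseq_succ j
    rw [show aseq (j + 2 + 1) = 2 ^ (j + 1) + aseq (j + 1) from rfl]
    rw [show 2 ^ (j + 2 + 1) = 4 * 2 ^ (j + 1) by ring]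
    omega

theorem natDegree_sternP_two_pow_sub_le (j : ℕ) {n : ℕ} (hlo : aseq (j + 1) ≤ n)
    (hhi : n ≤ 2 ^ (j + 1)) :
    (sternP (2 ^ (j + 1) - n)).natDegree ≤ (sternP n).natDegree := by
  induction j generalizing n with
  | zero =>
    obtain rfl | rfl : n = 1 ∨ n = 2 := by simp [aseq] at hlo hhi; omega
    all_goals simp [sternP_zero, sternP_one]
  | succ j ih =>
    have ha := three_mul_aseq_succ j
    have ha' := three_mul_aseq_succ (j + 1)
    have hpow : 2 ^ (j + 1 + 1) = 2 * 2 ^ (j + 1) := by ring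
    have hpos := Nat.one_le_two_pow (n := j + 1)
    obtain ⟨t, rfl | rfl⟩ := Nat.even_or_odd' n
    · rw [show 2 ^ (j + 1 + 1) - 2 * t = 2 * (2 ^ (j + 1) - t) by omega,
        natDegree_sternP_two_mul (show t ≠ 0 by omega)]
      exact (natDegree_sternP_two_mul_le _).trans (by gcongr; exact ih (by omega) (by omega))
    · rw [show 2 ^ (j + 1 + 1) - (2 * t + 1) = 2 * (2 ^ (j + 1) - (t + 1)) + 1 by omega,
        natDegree_sternP_two_mul_add_one, natDegree_sternP_two_mul_add_one,
        show 2 ^ (j + 1) - (t + 1) + 1 = 2 ^ (j + 1) - t by omega]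
      refine max_le (le_max_of_le_right (ih (by omega) (by omega))) ?_
      rcases le_or_gt (aseq (j + 1)) t with ht | ht
      · exact le_max_of_le_left (ih ht (by omega))
      · -- only possible when `2 * t + 1 = aseq (j + 2)`, and then `2 ^ (j + 1) - t = 2 * t + 1`
        rw [show 2 ^ (j + 1) - t = 2 * t + 1 by omega, natDegree_sternP_two_mul_add_one]

theorem bsdVal_succ {m : ℕ} (b : Fin (m + 1) → ℤ) :
    bsdVal b = bsdVal (fun i : Fin m => b i.castSucc) + b (Fin.last m) * 2 ^ m := by
  simp [bsdVal, Fin.sum_univ_castSucc]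

theorem abs_le_one_of_isBSDDigits {m : ℕ} {b : Fin m → ℤ} (hb : IsBSDDigits b) (j : Fin m) :
    |b j| ≤ 1 := by
  obtain h | h | h := hb j <;> rw [h] <;> norm_num

theorem abs_bsdVal_lt {m : ℕ} {b : Fin m → ℤ} (hb : IsBSDDigits b) : |bsdVal b| < 2 ^ m := by
  induction m with
  | zero => simp [bsdVal]
  | succ m ih =>
    have hlow := ih (b := fun i => b i.castSucc) fun i => hb i.castSucc
    have htop := abs_le_one_of_isBSDDigits hb (Fin.last m)
    calc |bsdVal b| ≤ |bsdVal fun i : Fin m => b i.castSucc| + |b (Fin.last m)| * 2 ^ m := by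
          rw [bsdVal_succ]
          exact (abs_add_le _ _).trans_eq (by rw [abs_mul, abs_pow, abs_two])
      _ < 2 ^ m + 1 * 2 ^ m := add_lt_add_of_lt_of_le hlow (by gcongr)
      _ = 2 ^ (m + 1) := by ring

theorem NAFInterval_one_subset : NAFInterval 1 ⊆ {1} := by
  rintro n ⟨b, ⟨hb, -, htop⟩, hval⟩
  have hval' : (n : ℤ) = b 0 := by simp [← hval, bsdVal]
  have h0 := htop one_pos
  rcases hb 0 with h | h | h <;> simp_all

theorem NAFInterval_add_two_subset (j : ℕ) :
    NAFInterval (j + 2) ⊆ Set.Ioo (2 ^ j) (2 ^ (j + 1) + 2 ^ j) := by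
  rintro n ⟨b, ⟨hb, hadj, htop⟩, hval⟩
  have htop' : b (Fin.last (j + 1)) ≠ 0 := htop (by omega)
  have hnext : b (Fin.last j).castSucc = 0 :=
    (hadj (Fin.last j).castSucc (by simp)).resolve_right htop'
  have hlow := abs_bsdVal_lt (b := fun i : Fin j => b i.castSucc.castSucc) fun i => hb _
  rw [bsdVal_succ, bsdVal_succ, hnext] at hval
  have hpow : (2 : ℤ) ^ (j + 1) = 2 * 2 ^ j := by ring
  rw [abs_lt] at hlow
  rcases hb (Fin.last (j + 1)) with h | h | h
  · rw [h] at hval; omega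
  · exact absurd h htop'
  · rw [h] at hval
    simp only [Set.mem_Ioo]
    constructor <;> zify <;> omega

theorem ncard_NAFInterval_add_two_le (j : ℕ) :
    (NAFInterval (j + 2)).ncard ≤ 2 ^ (j + 1) - 1 := by
  refine (Set.ncard_le_ncard (NAFInterval_add_two_subset j) (Set.finite_Ioo _ _)).trans ?_
  rw [← Finset.coe_Ioo, Set.ncard_coe_finset, Nat.card_Ioo]
  omega

theorem aseq_add_le_two_pow {j v : ℕ} (hv : v < (NAFInterval (j + 1)).ncard) :
    aseq (j + 1) + v ≤ 2 ^ (j + 1) := by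
  cases j with
  | zero =>
    have := (Set.ncard_le_ncard NAFInterval_one_subset).trans_eq (Set.ncard_singleton 1)
    simp only [zero_add, aseq] at hv ⊢
    omega
  | succ j =>
    have ha := three_mul_aseq_succ (j + 1)
    have hv' : (NAFInterval (j + 1 + 1)).ncard ≤ 2 ^ (j + 1) - 1 := ncard_NAFInterval_add_two_le j
    have hpow : 2 ^ (j + 1 + 1) = 2 * 2 ^ (j + 1) := by ring
    omega

theorem stern_deg_lc_A (k v : ℕ) (hk : 3 ≤ k)
    (hv : v < (NAFInterval (k - 2)).ncard) :
    (sternP (aseq k + v)).natDegree = (sternP (aseq (k - 2) + v)).natDegree + 1 ∧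
    (sternP (aseq k + v)).leadingCoeff = (sternP (aseq (k - 2) + v)).leadingCoeff := by
  obtain ⟨j, rfl⟩ : ∃ j, k = j + 3 := ⟨k - 3, by omega⟩
  rw [show j + 3 - 2 = j + 1 by omega] at hv ⊢
  have hn := aseq_add_le_two_pow hv
  rw [show aseq (j + 3) = 2 ^ (j + 1) + aseq (j + 1) from rfl, add_assoc, sternP_two_pow_add _ hn]
  have hn0 : aseq (j + 1) + v ≠ 0 := by have := three_mul_aseq_succ j; omega
  exact natDegree_X_mul_add_of_natDegree_le (sternP_ne_zero hn0)
    (natDegree_sternP_two_pow_sub_le j (Nat.le_add_right _ _) hn)
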